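/- Optimal recovery of the derivative at a point from inexactly given functions: Let ω be a modulus of continuity, E a nontrivial real Banach space, a < b, t ∈ [a,b], h > 0; set h₁ = min{h, t−a}, h₂ = min{h, b−t}, I(α) = ∫_0^α ω(u) du, and δ = ((h₁+h₂)/2)·max{ω(h₁), ω(h₂)} − (I(h₁)+I(h₂))/2. Then the infimum, over all maps T: C([a,b],E) → E, of sup{ ‖f′(t) − T(g)‖ : f ∈ W^1H^ω([a,b],E), g ∈ C([a,b],E), sup_{u∈[a,b]} ‖f(u) − g(u)‖ ≤ δ } equals max{ω(h₁), ω(h₂)}, and the infimum is attained at the divided-difference operator T*(g) = (g(t+h₂) − g(t−h₁))/(h₁+h₂). -/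

import Mathlib

open MeasureTheory Set

/-- A modulus of continuity: `ω 0 = 0`, continuous, non-decreasing and subadditive on `[0, ∞)`. -/
def IsModulus (ω : ℝ → ℝ) : Prop :=
  ω 0 = 0 ∧ ContinuousOn ω (Set.Ici 0) ∧ MonotoneOn ω (Set.Ici 0) ∧
    ∀ s t : ℝ, 0 ≤ s → 0 ≤ t → ω (s + t) ≤ ω s + ω t

/-- The class `H^ω([a,b], E)`. -/
def HHolder {E : Type*} [NormedAddCommGroup E] (ω : ℝ → ℝ) (a b : ℝ) (f : ℝ → E) : Prop :=
  ∀ s ∈ Set.Icc a b, ∀ t ∈ Set.Icc a b, ‖f t - f s‖ ≤ ω |t - s|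


/-- The class `W¹H^ω([a,b],E)`: `f` is differentiable on `[a,b]` with derivative `f'` belonging
to `H^ω([a,b],E)`. -/
def W1HHolder {E : Type*} [NormedAddCommGroup E] [NormedSpace ℝ E]
    (ω : ℝ → ℝ) (a b : ℝ) (f f' : ℝ → E) : Prop :=
  (∀ t ∈ Set.Icc a b, HasDerivWithinAt f (f' t) (Set.Icc a b) t) ∧ HHolder ω a b f'


/-! For `f ∈ W¹H^ω` the mean value inequality gives
`‖f (t + h₂) - f (t - h₁) - (h₁ + h₂) • f' t‖ ≤ ∫_{t-h₁}^{t+h₂} ω |u - t| du = I(h₁) + I(h₂)`;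
adding the data error `2δ` and dividing by `h₁ + h₂` gives exactly `M = max{ω h₁, ω h₂}` for the
divided difference.

Conversely, the bump `φ = (M - ω |· - t|)⁺` is in `H^ω` (subadditivity), vanishes on `[a, b]`
outside `[t - h₁, t + h₂]` (as `M ≤ ω h`) and has integral `2δ` there. Hence for a unit vector `e`
the primitive `f` of `φ • e` shifted by `-δ • e` satisfies `‖f‖ ≤ δ` on `[a, b]`. Any method
receives the same data `0` for `f` and `-f`, whose derivatives at `t` are `±M • e`, so its error is
at least `M`. -/

namespace IsModulus

variable {ω : ℝ → ℝ}

lemma nonneg (hω : IsModulus ω) {s : ℝ} (hs : 0 ≤ s) : 0 ≤ ω s :=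
  hω.1 ▸ hω.2.2.1 self_mem_Ici hs hs

lemma mono (hω : IsModulus ω) {s r : ℝ} (hs : 0 ≤ s) (hsr : s ≤ r) : ω s ≤ ω r :=
  hω.2.2.1 hs (hs.trans hsr) hsr

lemma abs_sub_le (hω : IsModulus ω) {p q : ℝ} (hp : 0 ≤ p) (hq : 0 ≤ q) :
    |ω p - ω q| ≤ ω |p - q| := by
  wlog hqp : q ≤ p generalizing p q
  · rw [abs_sub_comm, abs_sub_comm p]
    exact this hq hp (le_of_not_ge hqp)
  have hsub := hω.2.2.2 q (p - q) hq (sub_nonneg.2 hqp)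
  rw [add_sub_cancel] at hsub
  rw [abs_of_nonneg (sub_nonneg.2 (hω.mono hq hqp)), abs_of_nonneg (sub_nonneg.2 hqp)]
  linarith

end IsModulus

section ContinuousModulus

variable {ω : ℝ → ℝ}

lemma ContinuousOn.continuous_comp_abs_sub (hω : ContinuousOn ω (Ici 0)) (t : ℝ) :
    Continuous fun u => ω |u - t| :=
  continuousOn_univ.1 <| hω.comp (by fun_prop : Continuous fun u : ℝ => |u - t|).continuousOn
    fun _ _ => mem_Ici.2 (abs_nonneg _)

lemma ContinuousOn.integral_comp_abs_sub (hω : ContinuousOn ω (Ici 0)) (t : ℝ) {h₁ h₂ : ℝ}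
    (h₁0 : 0 ≤ h₁) (h₂0 : 0 ≤ h₂) :
    ∫ u in (t - h₁)..(t + h₂), ω |u - t| = (∫ u in (0:ℝ)..h₁, ω u) + ∫ u in (0:ℝ)..h₂, ω u := by
  have hc := hω.continuous_comp_abs_sub t
  rw [← intervalIntegral.integral_add_adjacent_intervals (hc.intervalIntegrable _ t)
    (hc.intervalIntegrable t _)]
  congr 1
  · rw [intervalIntegral.integral_congr (g := fun u => ω (t - u)) fun u hu => ?_,
      intervalIntegral.integral_comp_sub_left (fun v => ω v) t]
    · simp
    · rw [uIcc_of_le (by linarith)] at hu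
      simp only [abs_of_nonpos (sub_nonpos.2 hu.2), neg_sub]
  · rw [intervalIntegral.integral_congr (g := fun u => ω (u - t)) fun u hu => ?_,
      intervalIntegral.integral_comp_sub_right (fun v => ω v) t]
    · simp
    · rw [uIcc_of_le (by linarith)] at hu
      simp only [abs_of_nonneg (sub_nonneg.2 hu.1)]

end ContinuousModulus

def modulusBump (ω : ℝ → ℝ) (M t u : ℝ) : ℝ := max (M - ω |u - t|) 0

section ModulusBump

variable {ω : ℝ → ℝ} {M t u : ℝ}

lemma modulusBump_nonneg : 0 ≤ modulusBump ω M t u := le_max_right _ _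

lemma modulusBump_self (hω : ω 0 = 0) (hM : 0 ≤ M) : modulusBump ω M t t = M := by
  simp [modulusBump, hω, hM]

lemma modulusBump_of_le (h : ω |u - t| ≤ M) : modulusBump ω M t u = M - ω |u - t| :=
  max_eq_left (sub_nonneg.2 h)

lemma modulusBump_of_ge (h : M ≤ ω |u - t|) : modulusBump ω M t u = 0 :=
  max_eq_right (sub_nonpos.2 h)

lemma continuous_modulusBump (hω : ContinuousOn ω (Ici 0)) : Continuous (modulusBump ω M t) :=
  (continuous_const.sub (hω.continuous_comp_abs_sub t)).max continuous_const

lemma IsModulus.hHolder_modulusBump (hω : IsModulus ω) (a b : ℝ) :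
    HHolder ω a b (modulusBump ω M t) := by
  intro s _ u _
  rw [Real.norm_eq_abs]
  calc |modulusBump ω M t u - modulusBump ω M t s| ≤ |ω (|s - t|) - ω (|u - t|)| := by
        simpa [modulusBump] using abs_max_sub_max_le_abs (M - ω |u - t|) (M - ω |s - t|) 0
    _ ≤ ω |(|s - t| - |u - t|)| := hω.abs_sub_le (abs_nonneg _) (abs_nonneg _)
    _ ≤ ω |u - s| := hω.mono (abs_nonneg _) <| by
        simpa [abs_sub_comm] using abs_abs_sub_abs_le_abs_sub (s - t) (u - t)

lemma IsModulus.integral_modulusBump_eq_zero (hω : IsModulus ω) {r x y : ℝ} (hr : 0 ≤ r)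
    (hM : M ≤ ω r) (hxy : ∀ u ∈ uIcc x y, r ≤ |u - t|) :
    ∫ u in x..y, modulusBump ω M t u = 0 :=
  (intervalIntegral.integral_congr (g := fun _ => 0) fun u hu =>
    modulusBump_of_ge (hM.trans (hω.mono hr (hxy u hu)))).trans intervalIntegral.integral_zero

lemma IsModulus.integral_modulusBump (hω : IsModulus ω) {h₁ h₂ : ℝ} (h₁0 : 0 ≤ h₁)
    (h₂0 : 0 ≤ h₂) (hM₁ : ω h₁ ≤ M) (hM₂ : ω h₂ ≤ M) :
    ∫ u in (t - h₁)..(t + h₂), modulusBump ω M t u =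
      (h₁ + h₂) * M - ((∫ u in (0:ℝ)..h₁, ω u) + ∫ u in (0:ℝ)..h₂, ω u) := by
  have hle : ∀ u ∈ uIcc (t - h₁) (t + h₂), ω |u - t| ≤ M := fun u hu => by
    rw [uIcc_of_le (by linarith)] at hu
    rcases le_total u t with hut | htu
    · rw [abs_of_nonpos (sub_nonpos.2 hut), neg_sub]
      exact (hω.mono (by linarith) (by linarith [hu.1])).trans hM₁
    · rw [abs_of_nonneg (sub_nonneg.2 htu)]
      exact (hω.mono (by linarith) (by linarith [hu.2])).trans hM₂
  rw [intervalIntegral.integral_congr fun u hu => modulusBump_of_le (hle u hu),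
    intervalIntegral.integral_sub intervalIntegrable_const
      ((hω.2.1.continuous_comp_abs_sub t).intervalIntegrable _ _),
    hω.2.1.integral_comp_abs_sub t h₁0 h₂0, intervalIntegral.integral_const, smul_eq_mul]
  ring

end ModulusBump

lemma abs_integral_sub_half_le {φ : ℝ → ℝ} {a b x : ℝ} (hφ : IntervalIntegrable φ volume a b)
    (hφ0 : ∀ u ∈ Icc a b, 0 ≤ φ u) (hx : x ∈ Icc a b) :
    |(∫ u in a..x, φ u) - (∫ u in a..b, φ u) / 2| ≤ (∫ u in a..b, φ u) / 2 := by
  have h0 : 0 ≤ ∫ u in a..x, φ u :=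
    intervalIntegral.integral_nonneg hx.1 fun u hu => hφ0 u ⟨hu.1, hu.2.trans hx.2⟩
  have h1 : ∫ u in a..x, φ u ≤ ∫ u in a..b, φ u :=
    intervalIntegral.integral_mono_interval le_rfl hx.1 hx.2
      ((ae_restrict_iff' measurableSet_Ioc).2 (ae_of_all _ fun u hu => hφ0 u (Ioc_subset_Icc_self hu))) hφ
  rw [abs_le]
  constructor <;> linarith

section W1HHolder

variable {E : Type*} [NormedAddCommGroup E] [NormedSpace ℝ E] {ω : ℝ → ℝ} {a b : ℝ}

lemma w1HHolder_integral_sub {φ : ℝ → ℝ} (hφ : Continuous φ) (hφω : HHolder ω a b φ) (c : ℝ) :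
    W1HHolder ω a b (fun x => (∫ u in a..x, φ u) - c) φ :=
  ⟨fun x _ => ((hφ.integral_hasStrictDerivAt a x).hasDerivAt.sub_const c).hasDerivWithinAt, hφω⟩

lemma W1HHolder.smul_const {ψ φ : ℝ → ℝ} (h : W1HHolder ω a b ψ φ) {e : E} (he : ‖e‖ = 1) :
    W1HHolder ω a b (fun x => ψ x • e) (fun x => φ x • e) :=
  ⟨fun x hx => (h.1 x hx).smul_const e, fun s hs u hu => by
    simpa [← sub_smul, norm_smul, he] using h.2 s hs u hu⟩

lemma W1HHolder.neg {f f' : ℝ → E} (h : W1HHolder ω a b f f') : W1HHolder ω a b (-f) (-f') :=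
  ⟨fun x hx => (h.1 x hx).neg, fun s hs u hu => by
    rw [Pi.neg_apply, Pi.neg_apply, neg_sub_neg, norm_sub_rev]
    exact h.2 s hs u hu⟩

end W1HHolder

section Recovery

variable {E : Type*} [NormedAddCommGroup E] [NormedSpace ℝ E] {ω : ℝ → ℝ} {a b t : ℝ}
  {f f' : ℝ → E}

theorem W1HHolder.norm_sub_sub_smul_le (hω : ContinuousOn ω (Ici 0)) (hf : W1HHolder ω a b f f')
    (ht : t ∈ Icc a b) {p q : ℝ} (hp : a ≤ p) (hpq : p ≤ q) (hq : q ≤ b) :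
    ‖f q - f p - (q - p) • f' t‖ ≤ ∫ u in p..q, ω |u - t| := by
  have hsub : Icc p q ⊆ Icc a b := Icc_subset_Icc hp hq
  have hderiv : ∀ x ∈ Icc p q,
      HasDerivWithinAt (fun x => f x - f p - (x - p) • f' t) (f' x - f' t) (Icc p q) x :=
    fun x hx => by
      convert (((hf.1 x (hsub hx)).mono hsub).sub_const (f p)).sub
        (((hasDerivWithinAt_id x _).sub_const p).smul_const (f' t)) using 1
      · rfl
      · rw [one_smul]
  have := image_norm_le_of_norm_deriv_right_le_deriv_boundary
    (f := fun x => f x - f p - (x - p) • f' t) (B := fun x => ∫ u in p..x, ω |u - t|)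
    (fun x hx => (hderiv x hx).continuousWithinAt)
    (fun x hx => (hderiv x (Ico_subset_Icc_self hx)).mono_of_mem_nhdsWithin
      (Icc_mem_nhdsGE_of_mem hx))
    (by simp)
    (fun x => ((hω.continuous_comp_abs_sub t).integral_hasStrictDerivAt p x).hasDerivAt)
    (fun x hx => hf.2 t ht x (hsub (Ico_subset_Icc_self hx)))
  exact this ⟨hpq, le_rfl⟩

theorem W1HHolder.norm_deriv_sub_divided_difference_le (hω : ContinuousOn ω (Ici 0))
    (hf : W1HHolder ω a b f f') (ht : t ∈ Icc a b) {p q : ℝ} (hp : a ≤ p) (hpq : p < q)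
    (hq : q ≤ b) {g : ℝ → E} {δ : ℝ} (hgp : ‖f p - g p‖ ≤ δ) (hgq : ‖f q - g q‖ ≤ δ) :
    ‖f' t - (q - p)⁻¹ • (g q - g p)‖ ≤ ((∫ u in p..q, ω |u - t|) + 2 * δ) / (q - p) := by
  have hqp : 0 < q - p := sub_pos.2 hpq
  have hsplit : (q - p) • (f' t - (q - p)⁻¹ • (g q - g p)) =
      -(f q - f p - (q - p) • f' t) + (f q - g q) - (f p - g p) := by
    rw [smul_sub, smul_inv_smul₀ hqp.ne']
    abel
  rw [le_div_iff₀ hqp]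
  calc ‖f' t - (q - p)⁻¹ • (g q - g p)‖ * (q - p)
        = ‖-(f q - f p - (q - p) • f' t) + (f q - g q) - (f p - g p)‖ := by
        rw [← hsplit, norm_smul, Real.norm_of_nonneg hqp.le, mul_comm]
    _ ≤ ‖-(f q - f p - (q - p) • f' t)‖ + ‖f q - g q‖ + ‖f p - g p‖ :=
        norm_sub_le_of_le (norm_add_le _ _) le_rfl
    _ ≤ (∫ u in p..q, ω |u - t|) + δ + δ := by
        rw [norm_neg]
        gcongr
        exact hf.norm_sub_sub_smul_le hω ht hp hpq.le hq
    _ = _ := by ring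

theorem norm_deriv_le_of_forall_recovery_error_le {T : (ℝ → E) → E} {c δ : ℝ}
    (hT : ∀ f f' g : ℝ → E, W1HHolder ω a b f f' → ContinuousOn g (Icc a b) →
      (∀ u ∈ Icc a b, ‖f u - g u‖ ≤ δ) → ‖f' t - T g‖ ≤ c)
    (hf : W1HHolder ω a b f f') (hfδ : ∀ u ∈ Icc a b, ‖f u‖ ≤ δ) : ‖f' t‖ ≤ c := by
  have hpos := hT f f' 0 hf continuousOn_const (by simpa using hfδ)
  have hneg := hT (-f) (-f') 0 hf.neg continuousOn_const (by simpa using hfδ)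
  have htwo : (2 : ℝ) • f' t = (f' t - T 0) - ((-f') t - T 0) := by
    rw [Pi.neg_apply]
    module
  calc ‖f' t‖ = ‖(2 : ℝ) • f' t‖ / 2 := by rw [norm_smul]; norm_num
    _ ≤ (c + c) / 2 := by
        rw [htwo]
        gcongr
        exact (norm_sub_le _ _).trans (add_le_add hpos hneg)
    _ = c := by ring

end Recovery

theorem exists_w1HHolder_norm_le_norm_deriv_eq_max {E : Type*} [NormedAddCommGroup E]
    [NormedSpace ℝ E] [Nontrivial E] {ω : ℝ → ℝ} (hω : IsModulus ω) {a b t : ℝ}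
    (ht : t ∈ Icc a b) {h h₁ h₂ δ : ℝ} (hh : 0 ≤ h) (hh₁ : h₁ = min h (t - a))
    (hh₂ : h₂ = min h (b - t))
    (hδ : δ = ((h₁ + h₂) / 2) * max (ω h₁) (ω h₂) -
        ((∫ u in (0:ℝ)..h₁, ω u) + ∫ u in (0:ℝ)..h₂, ω u) / 2) :
    ∃ f f' : ℝ → E, W1HHolder ω a b f f' ∧ (∀ u ∈ Icc a b, ‖f u‖ ≤ δ) ∧
      ‖f' t‖ = max (ω h₁) (ω h₂) := by
  obtain ⟨hat, htb⟩ := ht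
  have h₁0 : 0 ≤ h₁ := hh₁ ▸ le_min hh (sub_nonneg.2 hat)
  have h₂0 : 0 ≤ h₂ := hh₂ ▸ le_min hh (sub_nonneg.2 htb)
  set M := max (ω h₁) (ω h₂)
  have hM0 : 0 ≤ M := (hω.nonneg h₁0).trans (le_max_left _ _)
  have hMh : M ≤ ω h :=
    max_le (hω.mono h₁0 (hh₁ ▸ min_le_left _ _)) (hω.mono h₂0 (hh₂ ▸ min_le_left _ _))
  set φ := modulusBump ω M t
  have hφ : Continuous φ := continuous_modulusBump hω.2.1
  have hleft : ∫ u in a..(t - h₁), φ u = 0 := by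
    rcases le_total h (t - a) with hle | hle
    · rw [hh₁, min_eq_left hle]
      refine hω.integral_modulusBump_eq_zero hh hMh fun u hu => ?_
      rw [uIcc_of_le (by linarith)] at hu
      rw [abs_of_nonpos (by linarith [hu.2])]
      linarith [hu.2]
    · rw [hh₁, min_eq_right hle, sub_sub_cancel, intervalIntegral.integral_same]
  have hright : ∫ u in (t + h₂)..b, φ u = 0 := by
    rcases le_total h (b - t) with hle | hle
    · rw [hh₂, min_eq_left hle]
      refine hω.integral_modulusBump_eq_zero hh hMh fun u hu => ?_
      rw [uIcc_of_le (by linarith)] at hu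
      rw [abs_of_nonneg (by linarith [hu.1])]
      linarith [hu.1]
    · rw [hh₂, min_eq_right hle, add_sub_cancel, intervalIntegral.integral_same]
  have htotal : ∫ u in a..b, φ u = 2 * δ := by
    rw [← intervalIntegral.integral_add_adjacent_intervals (hφ.intervalIntegrable a (t - h₁))
        (hφ.intervalIntegrable _ b),
      ← intervalIntegral.integral_add_adjacent_intervals (hφ.intervalIntegrable _ (t + h₂))
        (hφ.intervalIntegrable _ b),
      hleft, hright, hω.integral_modulusBump h₁0 h₂0 (le_max_left _ _) (le_max_right _ _), hδ]
    ring
  obtain ⟨e, he⟩ := exists_norm_eq E zero_le_one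
  refine ⟨fun x => ((∫ u in a..x, φ u) - δ) • e, fun x => φ x • e,
    (w1HHolder_integral_sub hφ (hω.hHolder_modulusBump a b) δ).smul_const he, fun u hu => ?_, ?_⟩
  · have := abs_integral_sub_half_le (hφ.intervalIntegrable a b)
      (fun _ _ => modulusBump_nonneg) hu
    rw [htotal, mul_div_cancel_left₀ _ two_ne_zero] at this
    rwa [norm_smul, he, mul_one, Real.norm_eq_abs]
  · rw [norm_smul, he, mul_one, show φ t = M from modulusBump_self hω.1 hM0, Real.norm_of_nonneg hM0]

theorem optimal_recovery_derivative_inexact_data_general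
    {E : Type*} [NormedAddCommGroup E] [NormedSpace ℝ E] [Nontrivial E]
    (ω : ℝ → ℝ) (hω : IsModulus ω)
    (a b : ℝ) (hab : a < b) (t : ℝ) (ht : t ∈ Set.Icc a b) (h : ℝ) (hh : 0 < h)
    (h₁ h₂ : ℝ) (hh₁ : h₁ = min h (t - a)) (hh₂ : h₂ = min h (b - t))
    (δ : ℝ)
    (hδ : δ = ((h₁ + h₂) / 2) * max (ω h₁) (ω h₂) -
        ((∫ u in (0:ℝ)..h₁, ω u) + ∫ u in (0:ℝ)..h₂, ω u) / 2) :
    -- the divided-difference operator recovers the derivative with error `max{ω h₁, ω h₂}` …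
    (∀ f f' g : ℝ → E, W1HHolder ω a b f f' → ContinuousOn g (Set.Icc a b) →
      (∀ u ∈ Set.Icc a b, ‖f u - g u‖ ≤ δ) →
      ‖f' t - (h₁ + h₂)⁻¹ • (g (t + h₂) - g (t - h₁))‖ ≤ max (ω h₁) (ω h₂)) ∧
    -- … and no operator can do better:
    ∀ T : (ℝ → E) → E, ∀ c : ℝ,
      (∀ f f' g : ℝ → E, W1HHolder ω a b f f' → ContinuousOn g (Set.Icc a b) →
        (∀ u ∈ Set.Icc a b, ‖f u - g u‖ ≤ δ) → ‖f' t - T g‖ ≤ c) →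
      max (ω h₁) (ω h₂) ≤ c := by
  refine ⟨fun f f' g hf _ hfg => ?_, fun T c hT => ?_⟩
  · have h₁0 : 0 ≤ h₁ := hh₁ ▸ le_min hh.le (sub_nonneg.2 ht.1)
    have h₂0 : 0 ≤ h₂ := hh₂ ▸ le_min hh.le (sub_nonneg.2 ht.2)
    have ha : a ≤ t - h₁ := by linarith [hh₁ ▸ min_le_right h (t - a)]
    have hb : t + h₂ ≤ b := by linarith [hh₂ ▸ min_le_right h (b - t)]
    have hsum : 0 < h₁ + h₂ := by
      rcases ht.1.lt_or_eq with hat | rfl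
      · linarith [hh₁ ▸ lt_min hh (sub_pos.2 hat)]
      · linarith [hh₂ ▸ lt_min hh (sub_pos.2 hab)]
    have hrec := hf.norm_deriv_sub_divided_difference_le hω.2.1 ht ha (by linarith) hb
      (hfg _ ⟨ha, by linarith⟩) (hfg _ ⟨by linarith, hb⟩)
    rw [show t + h₂ - (t - h₁) = h₁ + h₂ by ring, hω.2.1.integral_comp_abs_sub t h₁0 h₂0,
      hδ] at hrec
    calc _ ≤ _ := hrec
      _ = max (ω h₁) (ω h₂) := by field_simp; ring
  · obtain ⟨f, f', hf, hfδ, hf't⟩ :=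
      exists_w1HHolder_norm_le_norm_deriv_eq_max (E := E) hω ht hh.le hh₁ hh₂ hδ
    exact hf't ▸ norm_deriv_le_of_forall_recovery_error_le hT hf hfδ

/-- Optimal recovery of the derivative at a point from inexactly given functions: with
`h₁ = min{h, t−a}`, `h₂ = min{h, b−t}`, `I(α) = ∫_0^α ω(u) du` and
`δ = ((h₁+h₂)/2)·max{ω(h₁), ω(h₂)} − (I(h₁)+I(h₂))/2`, the optimal error of recovery of
`f ↦ f′(t)` on `W¹H^ω([a,b],E)` from functions known with error `δ` in the uniform metric equals
`max{ω(h₁), ω(h₂)}`, and is attained at the divided-difference operator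
`T*(g) = (g(t+h₂) − g(t−h₁))/(h₁+h₂)`. -/
theorem optimal_recovery_derivative_inexact_data
    {E : Type*} [NormedAddCommGroup E] [NormedSpace ℝ E] [CompleteSpace E] [Nontrivial E]
    (ω : ℝ → ℝ) (hω : IsModulus ω)
    (a b : ℝ) (hab : a < b) (t : ℝ) (ht : t ∈ Set.Icc a b) (h : ℝ) (hh : 0 < h)
    (h₁ h₂ : ℝ) (hh₁ : h₁ = min h (t - a)) (hh₂ : h₂ = min h (b - t))
    (δ : ℝ)
    (hδ : δ = ((h₁ + h₂) / 2) * max (ω h₁) (ω h₂) -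
        ((∫ u in (0:ℝ)..h₁, ω u) + ∫ u in (0:ℝ)..h₂, ω u) / 2) :
    -- the divided-difference operator recovers the derivative with error `max{ω h₁, ω h₂}` …
    (∀ f f' g : ℝ → E, W1HHolder ω a b f f' → ContinuousOn g (Set.Icc a b) →
      (∀ u ∈ Set.Icc a b, ‖f u - g u‖ ≤ δ) →
      ‖f' t - (h₁ + h₂)⁻¹ • (g (t + h₂) - g (t - h₁))‖ ≤ max (ω h₁) (ω h₂)) ∧
    -- … and no operator can do better:
    ∀ T : (ℝ → E) → E, ∀ c : ℝ,
      (∀ f f' g : ℝ → E, W1HHolder ω a b f f' → ContinuousOn g (Set.Icc a b) →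
        (∀ u ∈ Set.Icc a b, ‖f u - g u‖ ≤ δ) → ‖f' t - T g‖ ≤ c) →
      max (ω h₁) (ω h₂) ≤ c :=
  optimal_recovery_derivative_inexact_data_general ω hω a b hab t ht h hh h₁ h₂ hh₁ hh₂ δ hδ
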